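/- Let X be a connected Alexandroff space and A a subspace such that the inclusion A ↪ X induces the trivial map π₁(A,a) → π₁(X,a) for every basepoint a ∈ A. Then there exists a maximal tree T of X such that the functor F_T : X → π₁(X,x₀) is trivial on A, i.e., F_T sends every relation a ≤ a' with a, a' ∈ A to the identity element. -/

import Mathlib

open CategoryTheory

universe v u

/-- A subcategory of a category `C`, given by a set of objects and sets of morphisms closed
under identities and composition. -/
structure Subcat (C : Type u) [Category.{v} C] : Type (max u v) where
  objs : Set C
  homs : ∀ x y : C, Set (x ⟶ y)
  src_mem : ∀ {x y : C} {f : x ⟶ y}, f ∈ homs x y → x ∈ objs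
  tgt_mem : ∀ {x y : C} {f : x ⟶ y}, f ∈ homs x y → y ∈ objs
  id_mem : ∀ x ∈ objs, 𝟙 x ∈ homs x x
  comp_mem : ∀ {x y z : C} {f : x ⟶ y} {g : y ⟶ z},
    f ∈ homs x y → g ∈ homs y z → f ≫ g ∈ homs x z

namespace Subcat
variable {C : Type u} [Category.{v} C] (S : Subcat C)

/-- The underlying category of a subcategory. -/
def carrier : Type u := {x : C // x ∈ S.objs}

instance : Category.{v} S.carrier where
  Hom a b := {f : a.1 ⟶ b.1 // f ∈ S.homs a.1 b.1}
  id a := ⟨𝟙 a.1, S.id_mem a.1 a.2⟩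
  comp f g := ⟨f.1 ≫ g.1, S.comp_mem f.2 g.2⟩
  id_comp f := Subtype.ext (Category.id_comp f.1)
  comp_id f := Subtype.ext (Category.comp_id f.1)
  assoc f g h := Subtype.ext (Category.assoc f.1 g.1 h.1)

/-- The inclusion functor of a subcategory. -/
def incl : S.carrier ⥤ C where
  obj x := x.1
  map f := f.1
  map_id _ := rfl
  map_comp _ _ := rfl

end Subcat

/-- A category is indiscrete if there is exactly one morphism between any two objects. -/
def IsIndiscrete (D : Type*) [Category D] : Prop := ∀ x y : D, ∃! _f : x ⟶ y, True

/-- A small category is a tree if its localization (at all of its morphisms) is indiscrete. -/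
def IsTree (T : Type*) [Category T] : Prop :=
  IsIndiscrete ((⊤ : MorphismProperty T).Localization)

/-- The localization of a category at all of its morphisms. -/
abbrev LocCat (C : Type u) [Category.{v} C] := ((⊤ : MorphismProperty C)).Localization

/-- The canonical functor to the localization. -/
abbrev locQ (C : Type u) [Category.{v} C] : C ⥤ LocCat C := ((⊤ : MorphismProperty C)).Q

/-- The functor `LD → LC` induced on localizations by a functor `D ⥤ C`. -/
noncomputable def locMap {D : Type u} [Category.{v} D] {C : Type u} [Category.{v} C]
    (F : D ⥤ C) : LocCat D ⥤ LocCat C :=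
  CategoryTheory.Localization.Construction.lift (F ⋙ locQ C)
    (fun _ _ f _ => (⊤ : MorphismProperty C).Q_inverts (F.map f) (by trivial))

theorem locMap_obj {D : Type u} [Category.{v} D] {C : Type u} [Category.{v} C]
    (F : D ⥤ C) (x : D) :
    (locMap F).obj ((locQ D).obj x) = (locQ C).obj (F.obj x) :=
  CategoryTheory.Functor.congr_obj
    (CategoryTheory.Localization.Construction.fac (F ⋙ locQ C)
      (fun _ _ f _ => (⊤ : MorphismProperty C).Q_inverts (F.map f) (by trivial))) x

/-- The inclusion of a subspace of an Alexandroff space (i.e. of a subset of a preordered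
set), as a functor between the associated thin categories. -/
def inclFunctor {X : Type u} [Preorder X] (A : Set X) : ↥A ⥤ X :=
  Monotone.functor (f := (Subtype.val : ↥A → X)) (fun _ _ h => h)

/-! Build a spanning tree of `X` adapted to `A`: first a breadth-first spanning tree of the graph
whose vertices are the path components of `A` and the points outside `A`, each of its edges lifted
to a relation of `X` that ends at a chosen entry point of the component; then, inside every
component, a breadth-first tree of `A` rooted at its entry point. The tree arrows from `x₀` to
the points of a component of `A` then all factor through its entry point `e`, followed by images
of arrows of `LA`. So for `a ≤ a'` in `A`, the loop `τ x₀ a ≫ f ≫ τ a' x₀` is conjugate to the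
image of a loop of `LA` at `e`, which is trivial by hypothesis. -/

theorem isIndiscrete_of_natTrans {D : Type u} [Category.{v} D] [IsGroupoid D] {r : D}
    (c : (Functor.const D).obj r ⟶ 𝟭 D) : IsIndiscrete D := fun u v =>
  ⟨inv (c.app u) ≫ c.app v, trivial, fun g _ => by
    simpa using (c.naturality g).symm⟩

theorem isTree_of_natTrans {T : Type u} [Category.{v} T] {r : LocCat T}
    (c : (Functor.const T).obj r ⟶ locQ T) : IsTree T :=
  isIndiscrete_of_natTrans (r := r)
    (Localization.Construction.natTransExtension (F₁ := (Functor.const _).obj r) (F₂ := 𝟭 _) c)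

instance Subcat.isThin {C : Type u} [Category.{v} C] [Quiver.IsThin C] (S : Subcat C) :
    Quiver.IsThin S.carrier := fun _ _ => ⟨fun f g => Subtype.ext (Subsingleton.elim f.1 g.1)⟩

noncomputable def locMapHom {D : Type u} [Category.{v} D] {C : Type u} [Category.{v} C]
    (F : D ⥤ C) {a b : D} (t : (locQ D).obj a ⟶ (locQ D).obj b) :
    (locQ C).obj (F.obj a) ⟶ (locQ C).obj (F.obj b) :=
  eqToHom (locMap_obj F a).symm ≫ (locMap F).map t ≫ eqToHom (locMap_obj F b)

section locMapHom

variable {D : Type u} [Category.{v} D] {C : Type u} [Category.{v} C] (F : D ⥤ C)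

@[simp]
theorem locMapHom_id (a : D) : locMapHom F (𝟙 ((locQ D).obj a)) = 𝟙 _ := by
  simp [locMapHom]

@[simp]
theorem locMapHom_comp {a b c : D} (t : (locQ D).obj a ⟶ (locQ D).obj b)
    (t' : (locQ D).obj b ⟶ (locQ D).obj c) :
    locMapHom F (t ≫ t') = locMapHom F t ≫ locMapHom F t' := by
  simp [locMapHom]

@[simp]
theorem locMapHom_map {a b : D} (f : a ⟶ b) :
    locMapHom F ((locQ D).map f) = (locQ C).map (F.map f) := by
  have h : locQ D ⋙ locMap F = F ⋙ locQ C := Localization.Construction.fac _ _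
  have hf := Functor.congr_hom h f
  simp only [Functor.comp_map] at hf
  simp [locMapHom, hf]

@[simp]
theorem locMapHom_inv {a b : D} (t : (locQ D).obj a ⟶ (locQ D).obj b) :
    locMapHom F (inv t) = inv (locMapHom F t) := by
  rw [eq_comm, IsIso.inv_eq_of_hom_inv_id]
  rw [← locMapHom_comp, IsIso.hom_inv_id, locMapHom_id]

end locMapHom

noncomputable def zagHom {C : Type u} [Category.{v} C] {u v : C} (h : Zag u v) :
    (locQ C).obj u ⟶ (locQ C).obj v :=
  open Classical in
  if h' : Nonempty (u ⟶ v) then (locQ C).map h'.some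
  else inv ((locQ C).map (h.resolve_left h').some)

section Thin

variable {C : Type u} [Category.{v} C] [Quiver.IsThin C]

theorem inv_locQ_map {u v : C} (f : u ⟶ v) (g : v ⟶ u) :
    inv ((locQ C).map g) = (locQ C).map f := by
  rw [IsIso.inv_eq_of_hom_inv_id]
  rw [← Functor.map_comp, Subsingleton.elim (g ≫ f) (𝟙 v), (locQ C).map_id]

theorem zagHom_eq_map {u v : C} (h : Zag u v) (f : u ⟶ v) : zagHom h = (locQ C).map f := by
  rw [zagHom, dif_pos ⟨f⟩]
  exact congrArg _ (Subsingleton.elim _ _)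

theorem zagHom_eq_inv_map {u v : C} (h : Zag u v) (g : v ⟶ u) :
    zagHom h = inv ((locQ C).map g) := by
  rw [zagHom]
  split_ifs with h'
  · rw [inv_locQ_map h'.some g]
  · congr 2
    exact Subsingleton.elim _ _

theorem locMapHom_zagHom {D : Type u} [Category.{v} D] [Quiver.IsThin D] (F : C ⥤ D)
    {u v : C} (h : Zag u v) (h' : Zag (F.obj u) (F.obj v)) :
    locMapHom F (zagHom h) = zagHom h' := by
  obtain ⟨⟨f⟩⟩ | ⟨⟨g⟩⟩ := id h
  · rw [zagHom_eq_map _ f, locMapHom_map, zagHom_eq_map]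
  · rw [zagHom_eq_inv_map _ g, locMapHom_inv, locMapHom_map, zagHom_eq_inv_map]

end Thin

/-- A spanning tree of `X` rooted at `x₀`, given by parent pointers; `wf` says that following
parents from any vertex reaches the root. -/
structure ParentTree (X : Type u) [Preorder X] (x₀ : X) where
  par : X → X
  zag_par : ∀ x, x ≠ x₀ → Zag (par x) x
  wf : WellFounded fun y x => x ≠ x₀ ∧ y = par x

namespace ParentTree

variable {X : Type u} [Preorder X] {x₀ : X} (P : ParentTree X x₀)

def Adj (u v : X) : Prop := (u ≠ x₀ ∧ v = P.par u) ∨ (v ≠ x₀ ∧ u = P.par v)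

def subcat : Subcat X where
  objs := Set.univ
  homs x y := {_f | Relation.ReflTransGen (fun u v => u ≤ v ∧ P.Adj u v) x y}
  src_mem _ := Set.mem_univ _
  tgt_mem _ := Set.mem_univ _
  id_mem _ _ := Relation.ReflTransGen.refl
  comp_mem hf hg := hf.trans hg

def vertex (x : X) : P.subcat.carrier := ⟨x, Set.mem_univ x⟩

theorem zag_vertex_par {x : X} (hx : x ≠ x₀) : Zag (P.vertex (P.par x)) (P.vertex x) := by
  rcases P.zag_par x hx with ⟨⟨f⟩⟩ | ⟨⟨f⟩⟩
  · exact Zag.of_hom ⟨f, .single ⟨leOfHom f, .inr ⟨hx, rfl⟩⟩⟩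
  · exact Zag.of_inv ⟨f, .single ⟨leOfHom f, .inl ⟨hx, rfl⟩⟩⟩

noncomputable def rootHom : ∀ x : X,
    (locQ P.subcat.carrier).obj (P.vertex x₀) ⟶ (locQ P.subcat.carrier).obj (P.vertex x) :=
  open Classical in
  P.wf.fix fun x rec => if hx : x = x₀ then eqToHom (by rw [hx]) else
    rec (P.par x) ⟨hx, rfl⟩ ≫ zagHom (P.zag_vertex_par hx)

theorem rootHom_root : P.rootHom x₀ = 𝟙 _ := by
  rw [rootHom, P.wf.fix_eq, dif_pos rfl, eqToHom_refl]

theorem rootHom_of_ne {x : X} (hx : x ≠ x₀) :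
    P.rootHom x = P.rootHom (P.par x) ≫ zagHom (P.zag_vertex_par hx) := by
  rw [rootHom, P.wf.fix_eq, dif_neg hx]

theorem rootHom_comp_map_of_adj {u v : X} (h : P.Adj u v) (s : P.vertex u ⟶ P.vertex v) :
    P.rootHom u ≫ (locQ _).map s = P.rootHom v := by
  rcases h with ⟨hu, rfl⟩ | ⟨hv, rfl⟩
  · rw [P.rootHom_of_ne hu, zagHom_eq_inv_map _ s, Category.assoc, IsIso.inv_hom_id,
      Category.comp_id]
  · rw [P.rootHom_of_ne hv, zagHom_eq_map _ s]

theorem rootHom_comp_map {x y : X} (s : P.vertex x ⟶ P.vertex y) :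
    P.rootHom x ≫ (locQ _).map s = P.rootHom y := by
  suffices ∀ y, Relation.ReflTransGen (fun u v => u ≤ v ∧ P.Adj u v) x y →
      ∀ s : P.vertex x ⟶ P.vertex y, P.rootHom x ≫ (locQ _).map s = P.rootHom y from
    this y s.2 s
  intro y hxy
  induction hxy with
  | refl => intro s; rw [Subsingleton.elim s (𝟙 _), (locQ _).map_id, Category.comp_id]
  | @tail z y hxz hzy ih =>
    have hle : x ≤ z := by
      simpa [Relation.reflTransGen_eq_self] using
        Relation.ReflTransGen.mono (p := (· ≤ ·)) (fun _ _ h => h.1) _ _ hxz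
    intro s
    rw [Subsingleton.elim s ((⟨homOfLE hle, hxz⟩ : P.vertex x ⟶ P.vertex z) ≫
      (⟨homOfLE hzy.1, .single hzy⟩ : P.vertex z ⟶ P.vertex y)),
      Functor.map_comp, ← Category.assoc, ih, P.rootHom_comp_map_of_adj hzy.2]

theorem isTree : IsTree P.subcat.carrier :=
  isTree_of_natTrans (r := (locQ _).obj (P.vertex x₀))
    { app := fun a => P.rootHom a.1
      naturality := fun _ _ s => (Category.id_comp _).trans (P.rootHom_comp_map s).symm }

noncomputable def pathHom (x : X) : (locQ X).obj x₀ ⟶ (locQ X).obj x :=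
  locMapHom P.subcat.incl (P.rootHom x)

theorem pathHom_root : P.pathHom x₀ = 𝟙 _ := by
  rw [pathHom, rootHom_root, locMapHom_id]
  rfl

theorem pathHom_of_ne {x : X} (hx : x ≠ x₀) :
    P.pathHom x = P.pathHom (P.par x) ≫ zagHom (P.zag_par x hx) := by
  rw [pathHom, rootHom_of_ne _ hx, locMapHom_comp, locMapHom_zagHom]
  rfl

end ParentTree

def ReachWithin {α : Type*} (R : α → α → Prop) (S : Set α) : ℕ → α → Prop
  | 0, x => x ∈ S
  | n + 1, x => x ∈ S ∨ ∃ y, ReachWithin R S n y ∧ R y x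

theorem exists_parent_rank_lt {α : Type*} (R : α → α → Prop) (S : Set α)
    (hS : ∀ x, ∃ s ∈ S, Relation.ReflTransGen R s x) :
    ∃ (d : α → ℕ) (p : α → α), ∀ x ∉ S, R (p x) x ∧ d (p x) < d x := by
  classical
  have hreach : ∀ x, ∃ n, ReachWithin R S n x := by
    intro x
    obtain ⟨s, hs, hsx⟩ := hS x
    induction hsx with
    | refl => exact ⟨0, hs⟩
    | tail _ hyx ih =>
      obtain ⟨n, hn⟩ := ih
      exact ⟨n + 1, .inr ⟨_, hn, hyx⟩⟩
  have hpar : ∀ x ∉ S, ∃ y, R y x ∧ Nat.find (hreach y) < Nat.find (hreach x) := by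
    intro x hx
    have hspec := Nat.find_spec (hreach x)
    obtain ⟨m, hm⟩ : ∃ m, Nat.find (hreach x) = m + 1 :=
      Nat.exists_eq_succ_of_ne_zero fun h0 => hx (by rwa [h0] at hspec)
    rw [hm] at hspec
    obtain ⟨y, hy, hyx⟩ := hspec.resolve_left hx
    exact ⟨y, hyx, hm ▸ Nat.lt_succ_of_le (Nat.find_min' _ hy)⟩
  choose! p hp using hpar
  exact ⟨fun x => Nat.find (hreach x), p, hp⟩

section AComponents

variable {X : Type u} [Preorder X] (A : Set X)

def SameAComponent (x y : X) : Prop :=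
  x = y ∨ ∃ (hx : x ∈ A) (hy : y ∈ A), Zigzag (⟨x, hx⟩ : ↥A) ⟨y, hy⟩

def aComponentSetoid : Setoid X where
  r := SameAComponent A
  iseqv := by
    refine ⟨fun _ => .inl rfl, ?_, ?_⟩
    · rintro x y (rfl | ⟨hx, hy, h⟩)
      · exact .inl rfl
      · exact .inr ⟨hy, hx, h.symm⟩
    · rintro x y z (rfl | ⟨hx, hy, h⟩) hyz
      · exact hyz
      · rcases hyz with rfl | ⟨_, hz, h'⟩
        · exact .inr ⟨hx, hy, h⟩
        · exact .inr ⟨hx, hz, h.trans h'⟩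

abbrev AComponents := Quotient (aComponentSetoid A)

variable {A}

theorem SameAComponent.eq_of_not_mem {x y : X} (h : SameAComponent A x y) (hy : y ∉ A) :
    x = y :=
  h.resolve_right fun ⟨_, hy', _⟩ => hy hy'

theorem SameAComponent.zigzag {x y : X} (h : SameAComponent A x y) (hy : y ∈ A) :
    ∃ hx : x ∈ A, Zigzag (⟨x, hx⟩ : ↥A) ⟨y, hy⟩ := by
  rcases h with rfl | ⟨hx, _, h⟩
  · exact ⟨hy, Relation.ReflTransGen.refl⟩
  · exact ⟨hx, h⟩

theorem AComponents.mk_eq_of_zag {a b : ↥A} (h : Zag a b) :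
    (⟦a.1⟧ : AComponents A) = ⟦b.1⟧ :=
  Quotient.sound (.inr ⟨a.2, b.2, .of_zag h⟩)

theorem zag_val {a b : ↥A} (h : Zag a b) : Zag a.1 b.1 :=
  h.imp (Nonempty.map (inclFunctor A).map) (Nonempty.map (inclFunctor A).map)

/-- A breadth-first spanning tree of the graph of components, its edges lifted to zags of `X`. -/
theorem exists_entry_of_isConnected [IsConnected X] (x₀ : X) :
    ∃ entry src : AComponents A → X, ∃ d : AComponents A → ℕ,
      (∀ c, ⟦entry c⟧ = c) ∧ entry ⟦x₀⟧ = x₀ ∧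
      ∀ c ≠ ⟦x₀⟧, Zag (src c) (entry c) ∧ d ⟦src c⟧ < d c := by
  classical
  let R : AComponents A → AComponents A → Prop := fun c c' => ∃ u v, Zag u v ∧ ⟦u⟧ = c ∧ ⟦v⟧ = c'
  have hreach : ∀ c, ∃ s ∈ ({⟦x₀⟧} : Set (AComponents A)), Relation.ReflTransGen R s c := by
    refine Quotient.ind fun x => ⟨_, rfl, ?_⟩
    exact (isPreconnected_zigzag x₀ x).lift _ fun u v h => ⟨u, v, h, rfl, rfl⟩
  obtain ⟨d, p, hp⟩ := exists_parent_rank_lt R _ hreach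
  choose! src tgt hedge using fun c hc => (hp c hc).1
  refine ⟨fun c => if c = ⟦x₀⟧ then x₀ else tgt c, src, d, fun c => ?_, if_pos rfl, fun c hc => ?_⟩
  · dsimp only
    split_ifs with hc
    exacts [hc.symm, (hedge c hc).2.2]
  · obtain ⟨hzag, hsrc, -⟩ := hedge c hc
    dsimp only
    rw [if_neg hc, hsrc]
    exact ⟨hzag, (hp c hc).2⟩

end AComponents

namespace ParentTree

variable {X : Type u} [Preorder X] {x₀ : X} {A : Set X}

/-- Inside each component of `A`, the tree restricts to a tree rooted at the entry point. -/
def IsAdapted (P : ParentTree X x₀) (entry : AComponents A → X) : Prop :=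
  ∀ a : ↥A, a.1 ≠ entry ⟦a.1⟧ → a.1 ≠ x₀ ∧ ∃ h : P.par a ∈ A, Zag (⟨P.par a, h⟩ : ↥A) a

theorem exists_isAdapted [IsConnected X] (A : Set X) (x₀ : X) :
    ∃ (P : ParentTree X x₀) (entry : AComponents A → X), P.IsAdapted entry := by
  classical
  obtain ⟨entry, src, dC, hentry, hroot, hsrc⟩ := exists_entry_of_isConnected (A := A) x₀
  have hreach : ∀ a : ↥A, ∃ e ∈ {e : ↥A | e.1 = entry ⟦e.1⟧}, Relation.ReflTransGen Zag e a := by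
    intro a
    obtain ⟨he, hz⟩ := (Quotient.exact (hentry ⟦a.1⟧) : SameAComponent A _ _).zigzag a.2
    exact ⟨⟨_, he⟩, by rw [Set.mem_ofPred_eq, hentry], hz⟩
  obtain ⟨dA, pA, hA⟩ := exists_parent_rank_lt Zag _ hreach
  let par (x : X) : X := if h : x ∈ A ∧ x ≠ entry ⟦x⟧ then (pA ⟨x, h.1⟩).1 else src ⟦x⟧
  let rank (x : X) : ℕ ×ₗ ℕ := toLex (dC ⟦x⟧, if h : x ∈ A then dA ⟨x, h⟩ else 0)
  have hpar : ∀ x, x ≠ x₀ → Zag (par x) x ∧ rank (par x) < rank x := by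
    intro x hx
    by_cases h : x ∈ A ∧ x ≠ entry ⟦x⟧
    · obtain ⟨hz, hlt⟩ := hA ⟨x, h.1⟩ h.2
      simp only [par, rank, dif_pos h, dif_pos h.1, dif_pos (pA ⟨x, h.1⟩).2,
        AComponents.mk_eq_of_zag hz, Prod.Lex.toLex_lt_toLex, lt_irrefl, true_and, false_or]
      exact ⟨zag_val hz, hlt⟩
    · have hxe : entry ⟦x⟧ = x := by
        by_cases hxA : x ∈ A
        · exact (not_and_not_right.mp h hxA).symm
        · exact (Quotient.exact (hentry ⟦x⟧) : SameAComponent A _ _).eq_of_not_mem hxA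
      have hc : ⟦x⟧ ≠ (⟦x₀⟧ : AComponents A) := fun hc => hx (by rw [← hxe, hc, hroot])
      obtain ⟨hz, hlt⟩ := hsrc ⟦x⟧ hc
      simp only [par, rank, dif_neg h, Prod.Lex.toLex_lt_toLex]
      rw [hxe] at hz
      exact ⟨hz, .inl hlt⟩
  refine ⟨⟨par, fun x hx => (hpar x hx).1, ?_⟩, entry, fun a ha => ?_⟩
  · exact Subrelation.wf (fun ⟨hx, hy⟩ => hy ▸ (hpar _ hx).2) (InvImage.wf rank wellFounded_lt)
  · have hx₀ : a.1 ≠ x₀ := fun h => ha (by rw [h, hroot])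
    have hpa : par a = (pA a).1 := dif_pos ⟨a.2, ha⟩
    refine ⟨hx₀, ?_⟩
    dsimp only
    rw [hpa]
    exact ⟨(pA a).2, (hA a ha).1⟩

variable {P : ParentTree X x₀} {entry : AComponents A → X}

theorem exists_pathHom_eq_comp (hP : P.IsAdapted entry) (a : ↥A) :
    ∃ (e : ↥A) (γ : (locQ ↥A).obj e ⟶ (locQ ↥A).obj a), e.1 = entry ⟦a.1⟧ ∧
      P.pathHom a = P.pathHom e ≫ locMapHom (inclFunctor A) γ := by
  obtain ⟨x, ha⟩ := a
  induction x using WellFounded.induction P.wf with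
  | _ x ih =>
    by_cases hx : x = entry ⟦x⟧
    · exact ⟨⟨x, ha⟩, 𝟙 _, hx, by rw [locMapHom_id]; exact (Category.comp_id _).symm⟩
    · obtain ⟨hx₀, hpa, hzag⟩ := hP ⟨x, ha⟩ hx
      obtain ⟨e, γ, he, hγ⟩ := ih (P.par x) ⟨hx₀, rfl⟩ hpa
      refine ⟨e, γ ≫ zagHom hzag, he.trans (congrArg entry (AComponents.mk_eq_of_zag hzag)), ?_⟩
      rw [P.pathHom_of_ne hx₀, hγ, locMapHom_comp, locMapHom_zagHom _ hzag (P.zag_par x hx₀)]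
      exact Category.assoc _ _ _

theorem pathHom_comp_map (hP : P.IsAdapted entry)
    (htriv : ∀ (a : ↥A) (γ : (locQ ↥A).obj a ⟶ (locQ ↥A).obj a),
      locMapHom (inclFunctor A) γ = 𝟙 _) {a b : ↥A} (f : a ⟶ b) :
    P.pathHom a ≫ (locQ X).map ((inclFunctor A).map f) = P.pathHom b := by
  obtain ⟨e, γ, he, hγ⟩ := exists_pathHom_eq_comp hP a
  obtain ⟨e', γ', he', hγ'⟩ := exists_pathHom_eq_comp hP b
  obtain rfl : e = e' := Subtype.ext <| by
    rw [he, he', AComponents.mk_eq_of_zag (Zag.of_hom f)]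
  have hloop := htriv e (γ ≫ (locQ ↥A).map f ≫ inv γ')
  rw [locMapHom_comp, locMapHom_comp, locMapHom_inv, locMapHom_map, ← Category.assoc,
    comp_inv_eq_id] at hloop
  rw [hγ, hγ', ← hloop]
  exact Category.assoc _ _ _

end ParentTree

/-- Let `X` be a connected Alexandroff space (viewed as a preorder/thin
category) and `A` a subspace such that the inclusion `A ↪ X` induces the trivial map
`π₁(A,a) → π₁(X,a)` (i.e. `Aut_{LA}(a) → Aut_{LX}(a)`) for every `a ∈ A`.  Then there is a
maximal tree `T` of `X` such that `F_T : X → π₁(X,x₀)` is trivial on `A`: for every family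
`τ` of tree arrows of `T` (in `LX`), `F_T` sends each relation `a ≤ a'` in `A` to the
identity. -/
theorem stmt_18 {X : Type u} [Preorder X] [IsConnected X] (A : Set X) (x₀ : X)
    (htriv : ∀ (a : ↥A) (γ : (locQ ↥A).obj a ⟶ (locQ ↥A).obj a),
      eqToHom (locMap_obj (inclFunctor A) a).symm ≫ (locMap (inclFunctor A)).map γ ≫
          eqToHom (locMap_obj (inclFunctor A) a) =
        𝟙 ((locQ X).obj a.1)) :
    ∃ T : Subcat X, T.objs = Set.univ ∧ IsTree T.carrier ∧
      ∀ τ : ∀ a b : X, ((locQ X).obj a ⟶ (locQ X).obj b),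
        (∀ (a b : X) (ha : a ∈ T.objs) (hb : b ∈ T.objs)
          (t : (locQ T.carrier).obj ⟨a, ha⟩ ⟶ (locQ T.carrier).obj ⟨b, hb⟩),
          τ a b = eqToHom (locMap_obj T.incl ⟨a, ha⟩).symm ≫ (locMap T.incl).map t ≫
            eqToHom (locMap_obj T.incl ⟨b, hb⟩)) →
        ∀ (a a' : X), a ∈ A → a' ∈ A → ∀ f : a ⟶ a',
          τ x₀ a ≫ (locQ X).map f ≫ τ a' x₀ = 𝟙 ((locQ X).obj x₀) := by
  obtain ⟨P, entry, hP⟩ := ParentTree.exists_isAdapted A x₀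
  refine ⟨P.subcat, rfl, P.isTree, fun τ hτ a a' ha ha' f => ?_⟩
  have hτ_eq (b c : X) : τ b c = inv (P.pathHom b) ≫ P.pathHom c := by
    rw [hτ b c trivial trivial (inv (P.rootHom b) ≫ P.rootHom c :)]
    change locMapHom P.subcat.incl (inv (P.rootHom b) ≫ P.rootHom c) = _
    rw [locMapHom_comp, locMapHom_inv]
    rfl
  have hf : P.pathHom a ≫ (locQ X).map f = P.pathHom a' :=
    ParentTree.pathHom_comp_map hP htriv (homOfLE (leOfHom f) : (⟨a, ha⟩ : ↥A) ⟶ ⟨a', ha'⟩)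
  rw [hτ_eq, hτ_eq, P.pathHom_root, IsIso.inv_id, Category.id_comp, Category.comp_id,
    ← Category.assoc, hf, IsIso.hom_inv_id]
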